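/- arXiv:1109.3151 — 2 statements merged into one kernel-verified Lean document; each statement's English description precedes it below -/
import Mathlib

section
/- For all p, q ∈ C([0,T], ℝ), the market-clearing operator satisfies ‖T₅p − T₅q‖_∞ ≤ c·‖p − q‖_∞, where c = (γκ²/(N^d+N^s))·[ N^d·M_{Lip(f^{φ^d})}·( (1/ρ²)·‖B^d‖²·r^{−1}·(M_{K^d}·M_{h^d} + M_{D^d}) + (1/ρ)·M_{h^d} ) + N^s·M_{Lip(f^{φ^s})}·( (1/ρ²)·‖B^s‖²·r^{−1}·(M_{K^s}·M_{h^s} + M_{D^s}) + (1/ρ)·M_{h^s} ) ]. -/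
/-!
On continuous price paths all the integrals exist, so `S` and `X` are linear in the path and it
suffices to bound them for the single path `w = p - q`, with `|w| ≤ W := ‖p - q‖_∞` on `[0, T]`.
Every integrand is dominated by a constant times `e^{-ρ |τ - t|}`, whose integral over any
interval is at most `1/ρ` (the adjoint semigroup decays like the original one since
`exp (s Aᵀ) = (exp (s A))ᵀ`). This gives `‖S(w)(t)‖ ≤ (κ/ρ) (M_K M_h + M_D) W`, which the feedback
term `B r⁻¹ Bᵀ` turns into the bound on `X(w)(t)`; the Lipschitz bounds on the `f^φ` and a sum
over the agents then bound `T₅ p - T₅ q` pointwise.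
-/

open MeasureTheory Set
open scoped NNReal BigOperators

noncomputable section

/-- The map `S^{d_i}(p)(t) = ∫_t^T exp((τ - t) • Aᵀ) (K(τ) h + D) p(τ) dτ`
(here `Aᵀ` is realized as the adjoint of `A` on Euclidean space). -/
noncomputable def Svec {n : ℕ} (T : ℝ)
    (A : EuclideanSpace ℝ (Fin n) →L[ℝ] EuclideanSpace ℝ (Fin n))
    (K : ℝ → (EuclideanSpace ℝ (Fin n) →L[ℝ] EuclideanSpace ℝ (Fin n)))
    (h D : EuclideanSpace ℝ (Fin n)) (p : ℝ → ℝ) (t : ℝ) :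
    EuclideanSpace ℝ (Fin n) :=
  ∫ τ in t..T,
    p τ • (NormedSpace.exp ((τ - t) • (ContinuousLinearMap.adjoint A))) (K τ h + D)

/-- The closed-loop state map
`X(p)(t) = -∫_0^t exp((t-τ) • A) (B r⁻¹ Bᵀ S(p)(τ)) dτ + ∫_0^t exp((t-τ) • A) h p(τ) dτ`,
where `B r⁻¹ Bᵀ v = (r⁻¹ ⟪B, v⟫) • B`. -/
noncomputable def Xvec {n : ℕ} (T : ℝ)
    (A : EuclideanSpace ℝ (Fin n) →L[ℝ] EuclideanSpace ℝ (Fin n))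
    (K : ℝ → (EuclideanSpace ℝ (Fin n) →L[ℝ] EuclideanSpace ℝ (Fin n)))
    (B h D : EuclideanSpace ℝ (Fin n)) (r : ℝ) (p : ℝ → ℝ) (t : ℝ) :
    EuclideanSpace ℝ (Fin n) :=
  -(∫ τ in (0 : ℝ)..t,
      (NormedSpace.exp ((t - τ) • A))
        ((r⁻¹ * (inner ℝ B (Svec T A K h D p τ) : ℝ)) • B))
  + ∫ τ in (0 : ℝ)..t, p τ • (NormedSpace.exp ((t - τ) • A)) h

/-- The market clearing operator
`(T₅ p)(t) = (γ/(N^d+N^s)) (∑ᵢ f^{φ^{d_i}}(X^{d_i}(p)(t)) + ∑ⱼ f^{φ^{s_j}}(X^{s_j}(p)(t)) + η)`. -/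
noncomputable def Tmkt {nd ns Nd Ns : ℕ} (T : ℝ)
    (Ad : EuclideanSpace ℝ (Fin nd) →L[ℝ] EuclideanSpace ℝ (Fin nd))
    (As : EuclideanSpace ℝ (Fin ns) →L[ℝ] EuclideanSpace ℝ (Fin ns))
    (Kd : ℝ → (EuclideanSpace ℝ (Fin nd) →L[ℝ] EuclideanSpace ℝ (Fin nd)))
    (Ks : ℝ → (EuclideanSpace ℝ (Fin ns) →L[ℝ] EuclideanSpace ℝ (Fin ns)))
    (Bd : EuclideanSpace ℝ (Fin nd)) (Bs : EuclideanSpace ℝ (Fin ns))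
    (hd Dd : Fin Nd → EuclideanSpace ℝ (Fin nd))
    (hs Ds : Fin Ns → EuclideanSpace ℝ (Fin ns))
    (fφd : Fin Nd → (EuclideanSpace ℝ (Fin nd) → ℝ))
    (fφs : Fin Ns → (EuclideanSpace ℝ (Fin ns) → ℝ))
    (r γ η : ℝ) (p : ℝ → ℝ) (t : ℝ) : ℝ :=
  (γ / ((Nd : ℝ) + (Ns : ℝ))) *
    ((∑ i, fφd i (Xvec T Ad Kd Bd (hd i) (Dd i) r p t)) +
     (∑ j, fφs j (Xvec T As Ks Bs (hs j) (Ds j) r p t)) + η)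

end

theorem integral_exp_neg_mul_sub_le {ρ : ℝ} (hρ : 0 < ρ) (a b : ℝ) :
    ∫ τ in a..b, Real.exp (-ρ * (τ - a)) ≤ 1 / ρ := by
  rw [intervalIntegral.integral_comp_sub_right (fun x => Real.exp (-ρ * x)),
    intervalIntegral.integral_comp_mul_left (fun x => Real.exp x) (neg_ne_zero.2 hρ.ne'),
    integral_exp, sub_self, mul_zero, Real.exp_zero, smul_eq_mul, inv_neg, neg_mul, ← mul_neg,
    neg_sub, one_div]
  have := Real.exp_pos (-ρ * (b - a))
  exact mul_le_of_le_one_right (inv_nonneg.2 hρ.le) (by linarith)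

section DecayingIntegrand

variable {E : Type*} [NormedAddCommGroup E] [NormedSpace ℝ E] {f : ℝ → E} {a b C ρ : ℝ}

theorem norm_integral_le_of_norm_le_exp_decay (hρ : 0 < ρ) (hab : a ≤ b) (hC : 0 ≤ C)
    (hf : ∀ τ ∈ Icc a b, ‖f τ‖ ≤ C * Real.exp (-ρ * (τ - a))) :
    ‖∫ τ in a..b, f τ‖ ≤ C / ρ := by
  calc ‖∫ τ in a..b, f τ‖ ≤ ∫ τ in a..b, C * Real.exp (-ρ * (τ - a)) :=
        intervalIntegral.norm_integral_le_of_norm_le hab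
          (ae_of_all _ fun τ hτ => hf τ (Ioc_subset_Icc_self hτ))
          (Continuous.intervalIntegrable (by fun_prop) a b)
    _ ≤ C * (1 / ρ) := by
        rw [intervalIntegral.integral_const_mul]
        exact mul_le_mul_of_nonneg_left (integral_exp_neg_mul_sub_le hρ a b) hC
    _ = C / ρ := mul_one_div C ρ

theorem norm_integral_le_of_norm_le_exp_growth (hρ : 0 < ρ) (hab : a ≤ b) (hC : 0 ≤ C)
    (hf : ∀ τ ∈ Icc a b, ‖f τ‖ ≤ C * Real.exp (-ρ * (b - τ))) :
    ‖∫ τ in a..b, f τ‖ ≤ C / ρ := by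
  have hreflect := norm_integral_le_of_norm_le_exp_decay (f := fun τ => f (a + b - τ)) hρ hab hC
    fun τ ⟨haτ, hτb⟩ => by
      rw [show τ - a = b - (a + b - τ) by ring]
      exact hf (a + b - τ) ⟨by linarith, by linarith⟩
  rwa [intervalIntegral.integral_comp_sub_left f (a + b), add_sub_cancel_left,
    add_sub_cancel_right] at hreflect

end DecayingIntegrand

theorem norm_exp_smul_adjoint {E : Type*} [NormedAddCommGroup E] [InnerProductSpace ℝ E]
    [CompleteSpace E] (A : E →L[ℝ] E) (s : ℝ) :
    ‖NormedSpace.exp (s • ContinuousLinearMap.adjoint A)‖ = ‖NormedSpace.exp (s • A)‖ := by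
  have : s • ContinuousLinearMap.adjoint A = star (s • A) := by
    rw [star_smul, star_trivial, ContinuousLinearMap.star_eq_adjoint]
  rw [this, ← NormedSpace.star_exp, norm_star]

theorem le_iSup_Icc_of_continuousOn {f : ℝ → ℝ} {a b τ : ℝ} (hf : ContinuousOn f (Icc a b))
    (hτ : τ ∈ Icc a b) : f τ ≤ ⨆ t : Icc a b, f t :=
  le_ciSup (f := fun t : Icc a b => f t)
    (by rw [← image_eq_range]; exact isCompact_Icc.bddAbove_image hf) ⟨τ, hτ⟩

theorem abs_sum_sub_sum_le_of_lipschitzWith {ι E : Type*} [Fintype ι] [PseudoMetricSpace E]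
    {f : ι → E → ℝ} {L : ι → ℝ≥0} {M ε : ℝ} (hf : ∀ i, LipschitzWith (L i) (f i))
    (hL : ∀ i, (L i : ℝ) ≤ M) {x y : ι → E} (hxy : ∀ i, dist (x i) (y i) ≤ ε) :
    |∑ i, f i (x i) - ∑ i, f i (y i)| ≤ Fintype.card ι * (M * ε) := by
  rw [← Finset.sum_sub_distrib]
  calc |∑ i, (f i (x i) - f i (y i))| ≤ ∑ i, |f i (x i) - f i (y i)| :=
        Finset.abs_sum_le_sum_abs _ _
    _ ≤ ∑ _i : ι, M * ε := Finset.sum_le_sum fun i _ => by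
        rw [← Real.dist_eq]
        exact ((hf i).dist_le_mul _ _).trans
          (mul_le_mul (hL i) (hxy i) dist_nonneg ((L i).2.trans (hL i)))
    _ = Fintype.card ι * (M * ε) := by
        rw [Finset.sum_const, Finset.card_univ, nsmul_eq_mul]

/-- `NormedSpace.exp_continuous` and `NormedSpace.exp_add_of_commute` are stated for normed
`ℚ`-algebras. -/
noncomputable instance {E : Type*} [NormedAddCommGroup E] [NormedSpace ℝ E] :
    NormedAlgebra ℚ (E →L[ℝ] E) :=
  NormedAlgebra.restrictScalars ℚ ℝ _

section ControlMaps

variable {n : ℕ} {T : ℝ} {A : EuclideanSpace ℝ (Fin n) →L[ℝ] EuclideanSpace ℝ (Fin n)}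
  {K : ℝ → (EuclideanSpace ℝ (Fin n) →L[ℝ] EuclideanSpace ℝ (Fin n))}
  {B h D : EuclideanSpace ℝ (Fin n)} {r : ℝ} {p q w : ℝ → ℝ} {t : ℝ}

/-- `exp((τ - t) Aᵀ) = exp(-t Aᵀ) exp(τ Aᵀ)` writes `S(p)(t)` as a fixed continuous family of
operators applied to a primitive `∫_t^T`. -/
theorem continuousOn_Svec (hT : 0 ≤ T) (hK : ContinuousOn K (Icc 0 T))
    (hp : ContinuousOn p (Icc 0 T)) : ContinuousOn (Svec T A K h D p) (Icc 0 T) := by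
  set A' := ContinuousLinearMap.adjoint A
  set g : ℝ → EuclideanSpace ℝ (Fin n) := fun τ => p τ • NormedSpace.exp (τ • A') (K τ h + D)
  have hg : IntegrableOn g (uIcc 0 T) := by
    rw [uIcc_of_le hT]
    refine ContinuousOn.integrableOn_Icc (hp.smul (ContinuousOn.clm_apply ?_ ?_))
    · exact (NormedSpace.exp_continuous.comp (by fun_prop)).continuousOn
    · exact (hK.clm_apply continuousOn_const).add continuousOn_const
  have hprimitive := intervalIntegral.continuousOn_primitive_interval_left hg
  rw [uIcc_of_le hT] at hprimitive
  have hfactor : EqOn (Svec T A K h D p)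
      (fun t => NormedSpace.exp ((-t) • A') (∫ τ in t..T, g τ)) (Icc 0 T) := by
    intro t ht
    dsimp only
    have hgt : IntervalIntegrable g volume t T :=
      (hg.mono_set (uIcc_subset_uIcc_right (mem_uIcc_of_le ht.1 ht.2))).intervalIntegrable
    rw [Svec, ← ContinuousLinearMap.intervalIntegral_comp_comm _ hgt]
    refine intervalIntegral.integral_congr fun τ _ => ?_
    have hcomm : Commute ((-t) • A') (τ • A') := ((Commute.refl A').smul_left _).smul_right _
    rw [sub_eq_neg_add, add_smul, NormedSpace.exp_add_of_commute hcomm]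
    exact ((NormedSpace.exp ((-t) • A')).map_smul (p τ) _).symm
  refine ContinuousOn.congr (ContinuousOn.clm_apply ?_ hprimitive) hfactor
  exact (NormedSpace.exp_continuous.comp (by fun_prop)).continuousOn

theorem Svec_sub (hK : ContinuousOn K (Icc 0 T)) (hp : ContinuousOn p (Icc 0 T))
    (hq : ContinuousOn q (Icc 0 T)) (ht : t ∈ Icc 0 T) :
    Svec T A K h D p t - Svec T A K h D q t = Svec T A K h D (p - q) t := by
  have hv : ContinuousOn
      (fun τ => NormedSpace.exp ((τ - t) • ContinuousLinearMap.adjoint A) (K τ h + D))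
      (Icc t T) :=
    ((NormedSpace.exp_continuous.comp (by fun_prop)).continuousOn).clm_apply
      (((hK.mono (Icc_subset_Icc_left ht.1)).clm_apply continuousOn_const).add continuousOn_const)
  have hint : ∀ {u : ℝ → ℝ}, ContinuousOn u (Icc 0 T) → IntervalIntegrable
      (fun τ => u τ • NormedSpace.exp ((τ - t) • ContinuousLinearMap.adjoint A) (K τ h + D))
      volume t T := fun hu =>
    ((hu.mono (Icc_subset_Icc_left ht.1)).smul hv).intervalIntegrable_of_Icc ht.2
  rw [Svec, Svec, Svec, ← intervalIntegral.integral_sub (hint hp) (hint hq)]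
  simp only [Pi.sub_apply, sub_smul]

theorem norm_Svec_le {κ ρ MK Mh MD W : ℝ} (hρ : 0 < ρ)
    (hA : ∀ s : ℝ, 0 ≤ s → ‖NormedSpace.exp (s • A)‖ ≤ κ * Real.exp (-ρ * s))
    (hMK : ∀ τ ∈ Icc 0 T, ‖K τ‖ ≤ MK) (hMh : ‖h‖ ≤ Mh) (hMD : ‖D‖ ≤ MD)
    (hw : ∀ τ ∈ Icc 0 T, |w τ| ≤ W) (ht : t ∈ Icc 0 T) :
    ‖Svec T A K h D w t‖ ≤ κ / ρ * ((MK * Mh + MD) * W) := by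
  have hκ : 0 ≤ κ := by simpa using (norm_nonneg _).trans (hA 0 le_rfl)
  have hMK0 : 0 ≤ MK := (norm_nonneg _).trans (hMK t ht)
  have hMh0 : 0 ≤ Mh := (norm_nonneg _).trans hMh
  have hMD0 : 0 ≤ MD := (norm_nonneg _).trans hMD
  have hW0 : 0 ≤ W := (abs_nonneg _).trans (hw t ht)
  calc ‖Svec T A K h D w t‖ ≤ κ * (MK * Mh + MD) * W / ρ := by
        refine norm_integral_le_of_norm_le_exp_decay hρ ht.2 (by positivity) fun τ hτ => ?_
        have hτT : τ ∈ Icc 0 T := ⟨ht.1.trans hτ.1, hτ.2⟩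
        have hv : ‖K τ h + D‖ ≤ MK * Mh + MD :=
          (norm_add_le _ _).trans (add_le_add ((K τ).le_of_opNorm_le_of_le (hMK τ hτT) hMh) hMD)
        have hexp : ‖NormedSpace.exp ((τ - t) • ContinuousLinearMap.adjoint A)‖ ≤
            κ * Real.exp (-ρ * (τ - t)) := by
          rw [norm_exp_smul_adjoint]
          exact hA _ (sub_nonneg.2 hτ.1)
        rw [norm_smul, Real.norm_eq_abs]
        calc |w τ| * ‖NormedSpace.exp ((τ - t) • ContinuousLinearMap.adjoint A) (K τ h + D)‖
            ≤ W * (κ * Real.exp (-ρ * (τ - t)) * (MK * Mh + MD)) :=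
              mul_le_mul (hw τ hτT) (ContinuousLinearMap.le_of_opNorm_le_of_le _ hexp hv)
                (norm_nonneg _) hW0
          _ = κ * (MK * Mh + MD) * W * Real.exp (-ρ * (τ - t)) := by ring
    _ = κ / ρ * ((MK * Mh + MD) * W) := by ring

theorem Xvec_sub (hT : 0 ≤ T) (hK : ContinuousOn K (Icc 0 T)) (hp : ContinuousOn p (Icc 0 T))
    (hq : ContinuousOn q (Icc 0 T)) (ht : t ∈ Icc 0 T) :
    Xvec T A K B h D r p t - Xvec T A K B h D r q t = Xvec T A K B h D r (p - q) t := by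
  have hsub : Icc 0 t ⊆ Icc 0 T := Icc_subset_Icc_right ht.2
  have hexp : ContinuousOn (fun τ => NormedSpace.exp ((t - τ) • A)) (Icc 0 t) :=
    (NormedSpace.exp_continuous.comp (by fun_prop)).continuousOn
  have hint₁ : ∀ {u : ℝ → ℝ}, ContinuousOn u (Icc 0 T) → IntervalIntegrable
      (fun τ => NormedSpace.exp ((t - τ) • A) ((r⁻¹ * inner ℝ B (Svec T A K h D u τ)) • B))
      volume 0 t := by
    intro u hu
    have hcoeff : ContinuousOn (fun τ => r⁻¹ * inner ℝ B (Svec T A K h D u τ)) (Icc 0 t) :=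
      continuousOn_const.fun_mul (continuousOn_const.inner ((continuousOn_Svec hT hK hu).mono hsub))
    exact (hexp.clm_apply (hcoeff.fun_smul continuousOn_const)).intervalIntegrable_of_Icc ht.1
  have hint₂ : ∀ {u : ℝ → ℝ}, ContinuousOn u (Icc 0 T) → IntervalIntegrable
      (fun τ => u τ • NormedSpace.exp ((t - τ) • A) h) volume 0 t := fun hu =>
    ((hu.mono hsub).smul (hexp.clm_apply continuousOn_const)).intervalIntegrable_of_Icc ht.1
  have hfeedback :
      ((∫ τ in (0 : ℝ)..t,
          NormedSpace.exp ((t - τ) • A) ((r⁻¹ * inner ℝ B (Svec T A K h D p τ)) • B)) -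
        ∫ τ in (0 : ℝ)..t,
          NormedSpace.exp ((t - τ) • A) ((r⁻¹ * inner ℝ B (Svec T A K h D q τ)) • B)) =
        ∫ τ in (0 : ℝ)..t,
          NormedSpace.exp ((t - τ) • A) ((r⁻¹ * inner ℝ B (Svec T A K h D (p - q) τ)) • B) := by
    rw [← intervalIntegral.integral_sub (hint₁ hp) (hint₁ hq)]
    refine intervalIntegral.integral_congr fun τ hτ => ?_
    rw [uIcc_of_le ht.1] at hτ
    simp only [← Svec_sub hK hp hq (hsub hτ), ← map_sub, ← sub_smul, inner_sub_right, mul_sub]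
  have hforcing : ((∫ τ in (0 : ℝ)..t, p τ • NormedSpace.exp ((t - τ) • A) h) -
      ∫ τ in (0 : ℝ)..t, q τ • NormedSpace.exp ((t - τ) • A) h) =
        ∫ τ in (0 : ℝ)..t, (p - q) τ • NormedSpace.exp ((t - τ) • A) h := by
    rw [← intervalIntegral.integral_sub (hint₂ hp) (hint₂ hq)]
    simp only [Pi.sub_apply, sub_smul]
  rw [Xvec, Xvec, Xvec, ← hfeedback, ← hforcing]
  abel

theorem norm_Xvec_le {κ ρ MK Mh MD W : ℝ} (hρ : 0 < ρ)
    (hA : ∀ s : ℝ, 0 ≤ s → ‖NormedSpace.exp (s • A)‖ ≤ κ * Real.exp (-ρ * s)) (hr : 0 ≤ r)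
    (hMK : ∀ τ ∈ Icc 0 T, ‖K τ‖ ≤ MK) (hMh : ‖h‖ ≤ Mh) (hMD : ‖D‖ ≤ MD)
    (hw : ∀ τ ∈ Icc 0 T, |w τ| ≤ W) (ht : t ∈ Icc 0 T) :
    ‖Xvec T A K B h D r w t‖ ≤
      κ ^ 2 * ((1 / ρ ^ 2) * ‖B‖ ^ 2 * r⁻¹ * (MK * Mh + MD) + (1 / ρ) * Mh) * W := by
  have hκ : 0 ≤ κ := by simpa using (norm_nonneg _).trans (hA 0 le_rfl)
  have hMK0 : 0 ≤ MK := (norm_nonneg _).trans (hMK t ht)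
  have hMh0 : 0 ≤ Mh := (norm_nonneg _).trans hMh
  have hMD0 : 0 ≤ MD := (norm_nonneg _).trans hMD
  have hW0 : 0 ≤ W := (abs_nonneg _).trans (hw t ht)
  have hS : ∀ τ ∈ Icc 0 T, ‖Svec T A K h D w τ‖ ≤ κ / ρ * ((MK * Mh + MD) * W) :=
    fun τ hτ => norm_Svec_le hρ hA hMK hMh hMD hw hτ
  have hexp : ∀ τ ∈ Icc 0 t, ‖NormedSpace.exp ((t - τ) • A)‖ ≤ κ * Real.exp (-ρ * (t - τ)) :=
    fun τ hτ => hA _ (sub_nonneg.2 hτ.2)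
  -- The decay bound at `s = 0`; this supplies the second factor `κ` of the `h`-term.
  have hhκ : ‖h‖ ≤ κ * Mh := by
    have hexp0 : ‖NormedSpace.exp ((0 : ℝ) • A)‖ ≤ κ := by simpa using hA 0 le_rfl
    have h0 := (NormedSpace.exp ((0 : ℝ) • A)).le_of_opNorm_le_of_le hexp0 hMh
    rwa [zero_smul ℝ A, NormedSpace.exp_zero, one_apply_eq_self] at h0
  have hfeedback : ‖∫ τ in (0 : ℝ)..t,
      NormedSpace.exp ((t - τ) • A) ((r⁻¹ * inner ℝ B (Svec T A K h D w τ)) • B)‖ ≤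
        κ * (r⁻¹ * ‖B‖ ^ 2 * (κ / ρ * ((MK * Mh + MD) * W))) / ρ := by
    refine norm_integral_le_of_norm_le_exp_growth hρ ht.1 (by positivity) fun τ hτ => ?_
    have hcoeff : ‖(r⁻¹ * inner ℝ B (Svec T A K h D w τ)) • B‖ ≤
        r⁻¹ * ‖B‖ ^ 2 * (κ / ρ * ((MK * Mh + MD) * W)) := by
      rw [norm_smul, norm_mul, Real.norm_of_nonneg (inv_nonneg.2 hr), Real.norm_eq_abs]
      calc r⁻¹ * |inner ℝ B (Svec T A K h D w τ)| * ‖B‖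
          ≤ r⁻¹ * (‖B‖ * (κ / ρ * ((MK * Mh + MD) * W))) * ‖B‖ := by
            gcongr
            exact (abs_real_inner_le_norm _ _).trans
              (mul_le_mul_of_nonneg_left (hS τ ⟨hτ.1, hτ.2.trans ht.2⟩) (norm_nonneg B))
        _ = r⁻¹ * ‖B‖ ^ 2 * (κ / ρ * ((MK * Mh + MD) * W)) := by ring
    calc _ ≤ κ * Real.exp (-ρ * (t - τ)) * (r⁻¹ * ‖B‖ ^ 2 * (κ / ρ * ((MK * Mh + MD) * W))) :=
          ContinuousLinearMap.le_of_opNorm_le_of_le _ (hexp τ hτ) hcoeff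
      _ = _ := by ring
  have hforcing : ‖∫ τ in (0 : ℝ)..t, w τ • NormedSpace.exp ((t - τ) • A) h‖ ≤
      κ * (κ * Mh) * W / ρ := by
    refine norm_integral_le_of_norm_le_exp_growth hρ ht.1 (by positivity) fun τ hτ => ?_
    rw [norm_smul, Real.norm_eq_abs]
    calc _ ≤ W * (κ * Real.exp (-ρ * (t - τ)) * (κ * Mh)) :=
          mul_le_mul (hw τ ⟨hτ.1, hτ.2.trans ht.2⟩)
            (ContinuousLinearMap.le_of_opNorm_le_of_le _ (hexp τ hτ) hhκ) (norm_nonneg _) hW0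
      _ = _ := by ring
  calc ‖Xvec T A K B h D r w t‖ ≤
        κ * (r⁻¹ * ‖B‖ ^ 2 * (κ / ρ * ((MK * Mh + MD) * W))) / ρ + κ * (κ * Mh) * W / ρ := by
        rw [Xvec]
        exact (norm_add_le _ _).trans (by rw [norm_neg]; exact add_le_add hfeedback hforcing)
    _ = κ ^ 2 * ((1 / ρ ^ 2) * ‖B‖ ^ 2 * r⁻¹ * (MK * Mh + MD) + (1 / ρ) * Mh) * W := by ring

end ControlMaps

theorem abs_Tmkt_sub_le {nd ns Nd Ns : ℕ} {T r γ η t : ℝ}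
    {Ad : EuclideanSpace ℝ (Fin nd) →L[ℝ] EuclideanSpace ℝ (Fin nd)}
    {As : EuclideanSpace ℝ (Fin ns) →L[ℝ] EuclideanSpace ℝ (Fin ns)}
    {Kd : ℝ → (EuclideanSpace ℝ (Fin nd) →L[ℝ] EuclideanSpace ℝ (Fin nd))}
    {Ks : ℝ → (EuclideanSpace ℝ (Fin ns) →L[ℝ] EuclideanSpace ℝ (Fin ns))}
    {Bd : EuclideanSpace ℝ (Fin nd)} {Bs : EuclideanSpace ℝ (Fin ns)}
    {hd Dd : Fin Nd → EuclideanSpace ℝ (Fin nd)} {hs Ds : Fin Ns → EuclideanSpace ℝ (Fin ns)}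
    {fφd : Fin Nd → (EuclideanSpace ℝ (Fin nd) → ℝ)}
    {fφs : Fin Ns → (EuclideanSpace ℝ (Fin ns) → ℝ)}
    {Ld : Fin Nd → ℝ≥0} {Ls : Fin Ns → ℝ≥0} {MLd MLs εd εs : ℝ} {p q : ℝ → ℝ} (hγ : 0 ≤ γ)
    (hLd : ∀ i, LipschitzWith (Ld i) (fφd i)) (hLs : ∀ j, LipschitzWith (Ls j) (fφs j))
    (hMLd : ∀ i, (Ld i : ℝ) ≤ MLd) (hMLs : ∀ j, (Ls j : ℝ) ≤ MLs)
    (hXd : ∀ i, ‖Xvec T Ad Kd Bd (hd i) (Dd i) r p t - Xvec T Ad Kd Bd (hd i) (Dd i) r q t‖ ≤ εd)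
    (hXs : ∀ j, ‖Xvec T As Ks Bs (hs j) (Ds j) r p t - Xvec T As Ks Bs (hs j) (Ds j) r q t‖ ≤ εs) :
    |Tmkt T Ad As Kd Ks Bd Bs hd Dd hs Ds fφd fφs r γ η p t -
        Tmkt T Ad As Kd Ks Bd Bs hd Dd hs Ds fφd fφs r γ η q t| ≤
      γ / ((Nd : ℝ) + (Ns : ℝ)) * ((Nd : ℝ) * (MLd * εd) + (Ns : ℝ) * (MLs * εs)) := by
  have hdemand := abs_sum_sub_sum_le_of_lipschitzWith hLd hMLd
    fun i => (dist_eq_norm _ _).trans_le (hXd i)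
  have hsupply := abs_sum_sub_sum_le_of_lipschitzWith hLs hMLs
    fun j => (dist_eq_norm _ _).trans_le (hXs j)
  rw [Fintype.card_fin] at hdemand hsupply
  rw [Tmkt, Tmkt, ← mul_sub, abs_mul, abs_of_nonneg (by positivity)]
  gcongr
  calc _ = |((∑ i, fφd i (Xvec T Ad Kd Bd (hd i) (Dd i) r p t)) -
          ∑ i, fφd i (Xvec T Ad Kd Bd (hd i) (Dd i) r q t)) +
        ((∑ j, fφs j (Xvec T As Ks Bs (hs j) (Ds j) r p t)) -
          ∑ j, fφs j (Xvec T As Ks Bs (hs j) (Ds j) r q t))| := by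
        congr 1; ring
    _ ≤ _ := (abs_add_le _ _).trans (add_le_add hdemand hsupply)

theorem Tmkt_lipschitz_bound_general
    (T : ℝ) (hT : 0 < T)
    (Nd Ns nd ns : ℕ)
    (Ad : EuclideanSpace ℝ (Fin nd) →L[ℝ] EuclideanSpace ℝ (Fin nd))
    (As : EuclideanSpace ℝ (Fin ns) →L[ℝ] EuclideanSpace ℝ (Fin ns))
    (κ ρ : ℝ) (hρ : 0 < ρ)
    (hAd : ∀ t : ℝ, 0 ≤ t → ‖NormedSpace.exp (t • Ad)‖ ≤ κ * Real.exp (-ρ * t))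
    (hAs : ∀ t : ℝ, 0 ≤ t → ‖NormedSpace.exp (t • As)‖ ≤ κ * Real.exp (-ρ * t))
    (Bd : EuclideanSpace ℝ (Fin nd)) (Bs : EuclideanSpace ℝ (Fin ns))
    (r γ : ℝ) (hr : 0 < r) (hγ : 0 < γ) (η : ℝ)
    (Kd : ℝ → (EuclideanSpace ℝ (Fin nd) →L[ℝ] EuclideanSpace ℝ (Fin nd)))
    (Ks : ℝ → (EuclideanSpace ℝ (Fin ns) →L[ℝ] EuclideanSpace ℝ (Fin ns)))
    (hKdc : ContinuousOn Kd (Icc 0 T)) (hKsc : ContinuousOn Ks (Icc 0 T))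
    (MKd MKs : ℝ)
    (hMKd : ∀ t ∈ Icc (0 : ℝ) T, ‖Kd t‖ ≤ MKd)
    (hMKs : ∀ t ∈ Icc (0 : ℝ) T, ‖Ks t‖ ≤ MKs)
    (hd Dd : Fin Nd → EuclideanSpace ℝ (Fin nd))
    (hs Ds : Fin Ns → EuclideanSpace ℝ (Fin ns))
    (fφd : Fin Nd → (EuclideanSpace ℝ (Fin nd) → ℝ))
    (fφs : Fin Ns → (EuclideanSpace ℝ (Fin ns) → ℝ))
    (Ld : Fin Nd → ℝ≥0) (Ls : Fin Ns → ℝ≥0)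
    (hLd : ∀ i, LipschitzWith (Ld i) (fφd i))
    (hLs : ∀ j, LipschitzWith (Ls j) (fφs j))
    (Mhd MDd Mhs MDs MLd MLs : ℝ)
    (hMhd : ∀ i, ‖hd i‖ ≤ Mhd) (hMDd : ∀ i, ‖Dd i‖ ≤ MDd)
    (hMhs : ∀ j, ‖hs j‖ ≤ Mhs) (hMDs : ∀ j, ‖Ds j‖ ≤ MDs)
    (hMLd : ∀ i, (Ld i : ℝ) ≤ MLd) (hMLs : ∀ j, (Ls j : ℝ) ≤ MLs)
    :
    ∀ p q : ℝ → ℝ, ContinuousOn p (Icc 0 T) → ContinuousOn q (Icc 0 T) →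
      (⨆ t : Icc (0 : ℝ) T,
          |Tmkt T Ad As Kd Ks Bd Bs hd Dd hs Ds fφd fφs r γ η p (t : ℝ) -
            Tmkt T Ad As Kd Ks Bd Bs hd Dd hs Ds fφd fφs r γ η q (t : ℝ)|) ≤
        ((γ * κ ^ 2 / ((Nd : ℝ) + (Ns : ℝ))) *
            ((Nd : ℝ) * MLd *
                ((1 / ρ ^ 2) * ‖Bd‖ ^ 2 * r⁻¹ * (MKd * Mhd + MDd) + (1 / ρ) * Mhd) +
             (Ns : ℝ) * MLs *
                ((1 / ρ ^ 2) * ‖Bs‖ ^ 2 * r⁻¹ * (MKs * Mhs + MDs) + (1 / ρ) * Mhs))) *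
          (⨆ t : Icc (0 : ℝ) T, |p (t : ℝ) - q (t : ℝ)|) := by
  intro p q hp hq
  have : Nonempty (Icc (0 : ℝ) T) := ⟨⟨0, left_mem_Icc.2 hT.le⟩⟩
  have hW : ∀ τ ∈ Icc (0 : ℝ) T, |p τ - q τ| ≤ ⨆ t : Icc (0 : ℝ) T, |p (t : ℝ) - q (t : ℝ)| :=
    fun τ hτ => le_iSup_Icc_of_continuousOn (hp.sub hq).abs hτ
  refine ciSup_le fun t => ?_
  calc _ ≤ _ := abs_Tmkt_sub_le hγ.le hLd hLs hMLd hMLs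
          (fun i => by
            rw [Xvec_sub hT.le hKdc hp hq t.2]
            exact norm_Xvec_le hρ hAd hr.le hMKd (hMhd i) (hMDd i) hW t.2)
          (fun j => by
            rw [Xvec_sub hT.le hKsc hp hq t.2]
            exact norm_Xvec_le hρ hAs hr.le hMKs (hMhs j) (hMDs j) hW t.2)
    _ = _ := by ring

/-- The market-clearing operator `T₅` is Lipschitz on `C([0,T],ℝ)` with the
explicit constant `c` of Assumption (A7) of the paper:
`‖T₅ p − T₅ q‖_∞ ≤ c ‖p − q‖_∞`. -/
theorem Tmkt_lipschitz_bound
    (T : ℝ) (hT : 0 < T)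
    (Nd Ns nd ns : ℕ) (hNd : 0 < Nd) (hNs : 0 < Ns) (hnd : 0 < nd) (hns : 0 < ns)
    (Ad : EuclideanSpace ℝ (Fin nd) →L[ℝ] EuclideanSpace ℝ (Fin nd))
    (As : EuclideanSpace ℝ (Fin ns) →L[ℝ] EuclideanSpace ℝ (Fin ns))
    (κ ρ : ℝ) (hκ : 0 < κ) (hρ : 0 < ρ)
    (hAd : ∀ t : ℝ, 0 ≤ t → ‖NormedSpace.exp (t • Ad)‖ ≤ κ * Real.exp (-ρ * t))
    (hAs : ∀ t : ℝ, 0 ≤ t → ‖NormedSpace.exp (t • As)‖ ≤ κ * Real.exp (-ρ * t))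
    (Bd : EuclideanSpace ℝ (Fin nd)) (Bs : EuclideanSpace ℝ (Fin ns))
    (r γ : ℝ) (hr : 0 < r) (hγ : 0 < γ) (η : ℝ)
    (Kd : ℝ → (EuclideanSpace ℝ (Fin nd) →L[ℝ] EuclideanSpace ℝ (Fin nd)))
    (Ks : ℝ → (EuclideanSpace ℝ (Fin ns) →L[ℝ] EuclideanSpace ℝ (Fin ns)))
    (hKdc : ContinuousOn Kd (Icc 0 T)) (hKsc : ContinuousOn Ks (Icc 0 T))
    (MKd MKs : ℝ)
    (hMKd : ∀ t ∈ Icc (0 : ℝ) T, ‖Kd t‖ ≤ MKd)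
    (hMKs : ∀ t ∈ Icc (0 : ℝ) T, ‖Ks t‖ ≤ MKs)
    (hd Dd : Fin Nd → EuclideanSpace ℝ (Fin nd))
    (hs Ds : Fin Ns → EuclideanSpace ℝ (Fin ns))
    (fφd : Fin Nd → (EuclideanSpace ℝ (Fin nd) → ℝ))
    (fφs : Fin Ns → (EuclideanSpace ℝ (Fin ns) → ℝ))
    (Ld : Fin Nd → ℝ≥0) (Ls : Fin Ns → ℝ≥0)
    (hLd : ∀ i, LipschitzWith (Ld i) (fφd i))
    (hLs : ∀ j, LipschitzWith (Ls j) (fφs j))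
    (Mhd MDd Mhs MDs MLd MLs : ℝ)
    (hMhd : ∀ i, ‖hd i‖ ≤ Mhd) (hMDd : ∀ i, ‖Dd i‖ ≤ MDd)
    (hMhs : ∀ j, ‖hs j‖ ≤ Mhs) (hMDs : ∀ j, ‖Ds j‖ ≤ MDs)
    (hMLd : ∀ i, (Ld i : ℝ) ≤ MLd) (hMLs : ∀ j, (Ls j : ℝ) ≤ MLs)
    :
    ∀ p q : ℝ → ℝ, ContinuousOn p (Icc 0 T) → ContinuousOn q (Icc 0 T) →
      (⨆ t : Icc (0 : ℝ) T,
          |Tmkt T Ad As Kd Ks Bd Bs hd Dd hs Ds fφd fφs r γ η p (t : ℝ) -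
            Tmkt T Ad As Kd Ks Bd Bs hd Dd hs Ds fφd fφs r γ η q (t : ℝ)|) ≤
        ((γ * κ ^ 2 / ((Nd : ℝ) + (Ns : ℝ))) *
            ((Nd : ℝ) * MLd *
                ((1 / ρ ^ 2) * ‖Bd‖ ^ 2 * r⁻¹ * (MKd * Mhd + MDd) + (1 / ρ) * Mhd) +
             (Ns : ℝ) * MLs *
                ((1 / ρ ^ 2) * ‖Bs‖ ^ 2 * r⁻¹ * (MKs * Mhs + MDs) + (1 / ρ) * Mhs))) *
          (⨆ t : Icc (0 : ℝ) T, |p (t : ℝ) - q (t : ℝ)|) :=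
  Tmkt_lipschitz_bound_general T hT Nd Ns nd ns Ad As κ ρ hρ hAd hAs Bd Bs r γ hr hγ η Kd Ks hKdc
    hKsc MKd MKs hMKd hMKs hd Dd hs Ds fφd fφs Ld Ls hLd hLs Mhd MDd Mhs MDs MLd MLs hMhd hMDd hMhs
    hMDs hMLd hMLs
end

section
/- Let n ≥ 1, T > 0, r > 0, let A be a real n×n matrix, B a real n×1 matrix, and Q a real symmetric positive semidefinite n×n matrix. Then there exists a unique continuously differentiable function K : [0,T] → Mat(n×n, ℝ) satisfying the matrix Riccati terminal value problem K'(t) + K(t)A + AᵀK(t) − K(t)B r^{−1} Bᵀ K(t) + Q = 0 for all t ∈ [0,T], with K(T) = 0; moreover K(t) is symmetric and positive semidefinite for every t ∈ [0,T]. -/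
open Matrix Set

/-!
Radon's lemma. Put `S = r⁻¹ B Bᵀ` and let `(X, Y)` be the left block column of
`exp ((t - T) H)`, `H = [[A, -S], [-Q, -Aᵀ]]`; it solves `X' = AX - SY`, `Y' = -QX - AᵀY` with
`X(T) = 1`, `Y(T) = 0`, and wherever `X` is invertible `K = Y X⁻¹` solves the Riccati equation.
For `u` fixed, `x = Xu` and `y = Yu` satisfy `⟨x, y⟩' = -⟨x, Qx⟩ - ⟨y, Sy⟩ ≤ 0` and `⟨x, y⟩ = 0`
at `T`, so `⟨x, y⟩ ≥ 0` on `t ≤ T`. If `x(t) = 0` this quantity vanishes on `[t, T]`, forcing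
`Sy = 0` there, so `x' = Ax` with `x(t) = 0` and `u = x(T) = 0`: `X` is invertible for `t ≤ T`.
Writing `v = Xu`, the same quantity is `⟨v, Kv⟩ ≥ 0`. Uniqueness, and with it the symmetry of `K`
(`Kᵀ` solves the same problem), holds because the Riccati field is `C¹`, hence Lipschitz on the
compact set swept out by two solutions.
-/

noncomputable section

theorem ODE_solution_unique_of_contDiff_of_mem_Icc {E : Type*} [NormedAddCommGroup E]
    [NormedSpace ℝ E] {v : E → E} (hv : ContDiff ℝ 1 v) {f g : ℝ → E} {a b t₀ : ℝ}
    (ht₀ : t₀ ∈ Icc a b)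
    (hf : ∀ t ∈ Icc a b, HasDerivWithinAt f (v (f t)) (Icc a b) t)
    (hg : ∀ t ∈ Icc a b, HasDerivWithinAt g (v (g t)) (Icc a b) t)
    (heq : f t₀ = g t₀) : EqOn f g (Icc a b) := by
  have hfc : ContinuousOn f (Icc a b) := fun t ht => (hf t ht).continuousWithinAt
  have hgc : ContinuousOn g (Icc a b) := fun t ht => (hg t ht).continuousWithinAt
  set s := f '' Icc a b ∪ g '' Icc a b
  obtain ⟨K, hK⟩ := LocallyLipschitzOn.exists_lipschitzOnWith_of_compact
    ((isCompact_Icc.image_of_continuousOn hfc).union (isCompact_Icc.image_of_continuousOn hgc))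
    hv.locallyLipschitz.locallyLipschitzOn
  have hfs (t) (ht : t ∈ Icc a b) : f t ∈ s := .inl ⟨t, ht, rfl⟩
  have hgs (t) (ht : t ∈ Icc a b) : g t ∈ s := .inr ⟨t, ht, rfl⟩
  have hleft : Ioc a t₀ ⊆ Ioc a b := Ioc_subset_Ioc_right ht₀.2
  have hright : Ico t₀ b ⊆ Ico a b := Ico_subset_Ico_left ht₀.1
  have hIic {h : ℝ → E} (hh : ∀ t ∈ Icc a b, HasDerivWithinAt h (v (h t)) (Icc a b) t)
      (t) (ht : t ∈ Ioc a t₀) : HasDerivWithinAt h (v (h t)) (Iic t) t :=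
    (hh t (Ioc_subset_Icc_self (hleft ht))).mono_of_mem_nhdsWithin
      (Icc_mem_nhdsLE_of_mem (hleft ht))
  have hIci {h : ℝ → E} (hh : ∀ t ∈ Icc a b, HasDerivWithinAt h (v (h t)) (Icc a b) t)
      (t) (ht : t ∈ Ico t₀ b) : HasDerivWithinAt h (v (h t)) (Ici t) t :=
    (hh t (Ico_subset_Icc_self (hright ht))).mono_of_mem_nhdsWithin
      (Icc_mem_nhdsGE_of_mem (hright ht))
  rw [← Icc_union_Icc_eq_Icc ht₀.1 ht₀.2]
  exact EqOn.union
    (ODE_solution_unique_of_mem_Icc_left (fun _ _ => hK)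
      (hfc.mono (Icc_subset_Icc_right ht₀.2)) (hIic hf)
      (fun t ht => hfs t (Ioc_subset_Icc_self (hleft ht)))
      (hgc.mono (Icc_subset_Icc_right ht₀.2)) (hIic hg)
      (fun t ht => hgs t (Ioc_subset_Icc_self (hleft ht))) heq)
    (ODE_solution_unique_of_mem_Icc_right (fun _ _ => hK)
      (hfc.mono (Icc_subset_Icc_left ht₀.1)) (hIci hf)
      (fun t ht => hfs t (Ico_subset_Icc_self (hright ht)))
      (hgc.mono (Icc_subset_Icc_left ht₀.1)) (hIci hg)
      (fun t ht => hgs t (Ico_subset_Icc_self (hright ht))) heq)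

-- The operator norm makes square matrices a normed algebra, which `exp`, the product rule and
-- the derivative of the inverse need. Derivatives and continuity only see the topology, which is
-- the same for every norm, so nothing proved here depends on this choice.
attribute [local instance] Matrix.linftyOpNormedAddCommGroup Matrix.linftyOpNormedSpace
  Matrix.linftyOpNormedRing Matrix.linftyOpNormedAlgebra

section MatrixCalculus

variable {𝕜 : Type*} [NontriviallyNormedField 𝕜] {l m n p : Type*}
  [Fintype l] [Fintype m] [Fintype n] [Fintype p]

theorem HasDerivAt.dotProduct {f g : 𝕜 → n → 𝕜} {f' g' : n → 𝕜} {t : 𝕜}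
    (hf : HasDerivAt f f' t) (hg : HasDerivAt g g' t) :
    HasDerivAt (fun t => f t ⬝ᵥ g t) (f' ⬝ᵥ g t + f t ⬝ᵥ g') t := by
  have h := HasDerivAt.fun_sum (u := Finset.univ) fun i _ =>
    (hasDerivAt_pi.1 hf i).mul (hasDerivAt_pi.1 hg i)
  exact h.congr_deriv (Finset.sum_add_distrib ..)

variable [CompleteSpace 𝕜]

theorem HasDerivAt.matrix_mulVec {f : 𝕜 → Matrix m n 𝕜} {f' : Matrix m n 𝕜} {t : 𝕜}
    (hf : HasDerivAt f f' t) (u : n → 𝕜) :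
    HasDerivAt (fun t => f t *ᵥ u) (f' *ᵥ u) t :=
  let L : Matrix m n 𝕜 →ₗ[𝕜] m → 𝕜 :=
    { toFun := (· *ᵥ u), map_add' := (add_mulVec · · u), map_smul' := (smul_mulVec · · u) }
  L.toContinuousLinearMap.hasFDerivAt.comp_hasDerivAt (f := f) t hf

theorem HasDerivAt.matrix_transpose {f : 𝕜 → Matrix m n 𝕜} {f' : Matrix m n 𝕜} {t : 𝕜}
    (hf : HasDerivAt f f' t) : HasDerivAt (fun t => (f t)ᵀ) f'ᵀ t :=
  (transposeLinearEquiv m n 𝕜 𝕜).toContinuousLinearEquiv.hasFDerivAt.comp_hasDerivAt (f := f) t hf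

theorem HasDerivAt.matrix_toBlocks₁₁ {f : 𝕜 → Matrix (l ⊕ m) (n ⊕ p) 𝕜}
    {f' : Matrix (l ⊕ m) (n ⊕ p) 𝕜} {t : 𝕜} (hf : HasDerivAt f f' t) :
    HasDerivAt (fun t => (f t).toBlocks₁₁) f'.toBlocks₁₁ t :=
  let L : Matrix (l ⊕ m) (n ⊕ p) 𝕜 →ₗ[𝕜] Matrix l n 𝕜 :=
    { toFun := toBlocks₁₁, map_add' := fun _ _ => rfl, map_smul' := fun _ _ => rfl }
  L.toContinuousLinearMap.hasFDerivAt.comp_hasDerivAt (f := f) t hf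

theorem HasDerivAt.matrix_toBlocks₂₁ {f : 𝕜 → Matrix (l ⊕ m) (n ⊕ p) 𝕜}
    {f' : Matrix (l ⊕ m) (n ⊕ p) 𝕜} {t : 𝕜} (hf : HasDerivAt f f' t) :
    HasDerivAt (fun t => (f t).toBlocks₂₁) f'.toBlocks₂₁ t :=
  let L : Matrix (l ⊕ m) (n ⊕ p) 𝕜 →ₗ[𝕜] Matrix m n 𝕜 :=
    { toFun := toBlocks₂₁, map_add' := fun _ _ => rfl, map_smul' := fun _ _ => rfl }
  L.toContinuousLinearMap.hasFDerivAt.comp_hasDerivAt (f := f) t hf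

theorem HasDerivAt.matrix_inv [DecidableEq n] {f : ℝ → Matrix n n ℝ} {f' : Matrix n n ℝ} {t : ℝ}
    (hf : HasDerivAt f f' t) (hdet : IsUnit (f t).det) :
    HasDerivAt (fun t => (f t)⁻¹) (-((f t)⁻¹ * f' * (f t)⁻¹)) t := by
  obtain ⟨u, hu⟩ := (isUnit_iff_isUnit_det _).2 hdet
  have h := (hasFDerivAt_ringInverse (𝕜 := ℝ) u).comp_hasDerivAt_of_eq t hf hu
  rw [← Ring.inverse_unit, hu] at h
  simp only [nonsing_inv_eq_ringInverse]
  simp only [_root_.neg_apply, ContinuousLinearMap.mulLeftRight_apply] at h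
  exact h

end MatrixCalculus

variable {ι : Type*} [Fintype ι]

def riccatiField (A S Q M : Matrix ι ι ℝ) : Matrix ι ι ℝ :=
  -(M * A + Aᵀ * M - M * S * M + Q)

theorem riccatiField_transpose {A S Q : Matrix ι ι ℝ} (hS : S.IsSymm) (hQ : Q.IsSymm)
    (M : Matrix ι ι ℝ) : (riccatiField A S Q M)ᵀ = riccatiField A S Q Mᵀ := by
  simp only [riccatiField, transpose_neg, transpose_add, transpose_sub, transpose_mul,
    transpose_transpose, hS.eq, hQ.eq, Matrix.mul_assoc]
  abel

variable [DecidableEq ι]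

theorem contDiff_riccatiField (A S Q : Matrix ι ι ℝ) : ContDiff ℝ 1 (riccatiField A S Q) := by
  unfold riccatiField
  fun_prop

def hamiltonian (A S Q : Matrix ι ι ℝ) : Matrix (ι ⊕ ι) (ι ⊕ ι) ℝ :=
  fromBlocks A (-S) (-Q) (-Aᵀ)

def hamiltonianFlow (A S Q : Matrix ι ι ℝ) (T t : ℝ) : Matrix (ι ⊕ ι) (ι ⊕ ι) ℝ :=
  NormedSpace.exp ((t - T) • hamiltonian A S Q)

def flowX (A S Q : Matrix ι ι ℝ) (T t : ℝ) : Matrix ι ι ℝ :=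
  (hamiltonianFlow A S Q T t).toBlocks₁₁

def flowY (A S Q : Matrix ι ι ℝ) (T t : ℝ) : Matrix ι ι ℝ :=
  (hamiltonianFlow A S Q T t).toBlocks₂₁

def riccatiSolution (A S Q : Matrix ι ι ℝ) (T t : ℝ) : Matrix ι ι ℝ :=
  flowY A S Q T t * (flowX A S Q T t)⁻¹

section Flow

variable (A S Q : Matrix ι ι ℝ) (T : ℝ)

theorem hamiltonianFlow_self : hamiltonianFlow A S Q T T = 1 := by
  simp [hamiltonianFlow]

theorem flowX_self : flowX A S Q T T = 1 := by
  rw [flowX, hamiltonianFlow_self, ← fromBlocks_one, toBlocks_fromBlocks₁₁]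

theorem flowY_self : flowY A S Q T T = 0 := by
  rw [flowY, hamiltonianFlow_self, ← fromBlocks_one, toBlocks_fromBlocks₂₁]

theorem riccatiSolution_self : riccatiSolution A S Q T T = 0 := by
  rw [riccatiSolution, flowY_self, Matrix.zero_mul]

theorem hasDerivAt_hamiltonianFlow (t : ℝ) :
    HasDerivAt (hamiltonianFlow A S Q T)
      (hamiltonian A S Q * hamiltonianFlow A S Q T t) t :=
  (hasDerivAt_exp_smul_const' (hamiltonian A S Q) (t - T)).comp_sub_const t T

theorem hamiltonian_mul_hamiltonianFlow (t : ℝ) :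
    hamiltonian A S Q * hamiltonianFlow A S Q T t =
      fromBlocks (A * flowX A S Q T t - S * flowY A S Q T t)
        (A * (hamiltonianFlow A S Q T t).toBlocks₁₂ - S * (hamiltonianFlow A S Q T t).toBlocks₂₂)
        (-(Q * flowX A S Q T t) - Aᵀ * flowY A S Q T t)
        (-(Q * (hamiltonianFlow A S Q T t).toBlocks₁₂)
          - Aᵀ * (hamiltonianFlow A S Q T t).toBlocks₂₂) := by
  conv_lhs =>
    rw [← fromBlocks_toBlocks (hamiltonianFlow A S Q T t), hamiltonian, fromBlocks_multiply]
  simp [flowX, flowY, sub_eq_add_neg]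

theorem hasDerivAt_flowX (t : ℝ) :
    HasDerivAt (flowX A S Q T) (A * flowX A S Q T t - S * flowY A S Q T t) t := by
  have h := (hasDerivAt_hamiltonianFlow A S Q T t).matrix_toBlocks₁₁
  rwa [hamiltonian_mul_hamiltonianFlow, toBlocks_fromBlocks₁₁] at h

theorem hasDerivAt_flowY (t : ℝ) :
    HasDerivAt (flowY A S Q T) (-(Q * flowX A S Q T t) - Aᵀ * flowY A S Q T t) t := by
  have h := (hasDerivAt_hamiltonianFlow A S Q T t).matrix_toBlocks₂₁
  rwa [hamiltonian_mul_hamiltonianFlow, toBlocks_fromBlocks₂₁] at h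

theorem hasDerivAt_flow_dotProduct (u : ι → ℝ) (t : ℝ) :
    HasDerivAt (fun t => flowX A S Q T t *ᵥ u ⬝ᵥ flowY A S Q T t *ᵥ u)
      (-(flowX A S Q T t *ᵥ u ⬝ᵥ Q *ᵥ (flowX A S Q T t *ᵥ u)
        + flowY A S Q T t *ᵥ u ⬝ᵥ S *ᵥ (flowY A S Q T t *ᵥ u))) t := by
  refine (((hasDerivAt_flowX A S Q T t).matrix_mulVec u).dotProduct
    ((hasDerivAt_flowY A S Q T t).matrix_mulVec u)).congr_deriv ?_
  simp only [sub_mulVec, neg_mulVec, ← mulVec_mulVec, sub_dotProduct, dotProduct_sub,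
    dotProduct_neg]
  rw [dotProduct_mulVec _ Aᵀ, vecMul_transpose, dotProduct_comm (S *ᵥ _)]
  ring

variable {S Q} (hQ : Q.PosSemidef) (hS : S.PosSemidef)
include hQ hS

theorem antitone_flow_dotProduct (u : ι → ℝ) :
    Antitone fun t => flowX A S Q T t *ᵥ u ⬝ᵥ flowY A S Q T t *ᵥ u :=
  antitone_of_hasDerivAt_nonpos (hasDerivAt_flow_dotProduct A S Q T u) fun t =>
    neg_nonpos.2 <| add_nonneg (by simpa only [star_trivial] using hQ.dotProduct_mulVec_nonneg _)
      (by simpa only [star_trivial] using hS.dotProduct_mulVec_nonneg _)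

theorem flow_dotProduct_nonneg (u : ι → ℝ) {t : ℝ} (ht : t ≤ T) :
    0 ≤ flowX A S Q T t *ᵥ u ⬝ᵥ flowY A S Q T t *ᵥ u := by
  simpa [flowY_self] using antitone_flow_dotProduct A T hQ hS u ht

theorem mulVec_flowY_mulVec_eq_zero {u : ι → ℝ} {t s : ℝ} (hu : flowX A S Q T t *ᵥ u = 0)
    (htT : t < T) (hs : s ∈ Icc t T) : S *ᵥ (flowY A S Q T s *ᵥ u) = 0 := by
  set φ := fun t => flowX A S Q T t *ᵥ u ⬝ᵥ flowY A S Q T t *ᵥ u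
  have hφ : EqOn φ 0 (Icc t T) := fun r hr => le_antisymm
    (by simpa [φ, hu] using antitone_flow_dotProduct A T hQ hS u hr.1)
    (flow_dotProduct_nonneg A T hQ hS u hr.2)
  have hφ' := (uniqueDiffOn_Icc htT s hs).eq_deriv _
    ((hasDerivWithinAt_const s _ 0).congr hφ (hφ hs))
    (hasDerivAt_flow_dotProduct A S Q T u s).hasDerivWithinAt
  have hQ' : 0 ≤ flowX A S Q T s *ᵥ u ⬝ᵥ Q *ᵥ (flowX A S Q T s *ᵥ u) := by
    simpa only [star_trivial] using hQ.dotProduct_mulVec_nonneg _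
  have hS' : 0 ≤ flowY A S Q T s *ᵥ u ⬝ᵥ S *ᵥ (flowY A S Q T s *ᵥ u) := by
    simpa only [star_trivial] using hS.dotProduct_mulVec_nonneg _
  rw [← hS.dotProduct_mulVec_zero_iff, star_trivial]
  linarith

theorem isUnit_det_flowX {t : ℝ} (ht : t ≤ T) : IsUnit (flowX A S Q T t).det := by
  rw [isUnit_iff_ne_zero]
  intro hdet
  obtain ⟨u, hu0, hu⟩ := exists_mulVec_eq_zero_iff.2 hdet
  obtain htT | rfl := ht.lt_or_eq
  swap
  · exact hu0 (by simpa [flowX_self] using hu)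
  have hx (s) (hs : s ∈ Icc t T) : HasDerivWithinAt (fun s => flowX A S Q T s *ᵥ u)
      (A *ᵥ (flowX A S Q T s *ᵥ u)) (Icc t T) s := by
    have h := (hasDerivAt_flowX A S Q T s).matrix_mulVec u
    rw [sub_mulVec, ← mulVec_mulVec, ← mulVec_mulVec,
      mulVec_flowY_mulVec_eq_zero A T hQ hS hu htT hs, sub_zero] at h
    exact h.hasDerivWithinAt
  have hx0 := ODE_solution_unique_of_contDiff_of_mem_Icc
    (mulVecLin A).toContinuousLinearMap.contDiff (left_mem_Icc.2 ht) hx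
    (fun s _ => (hasDerivWithinAt_const s _ 0).congr_deriv (mulVec_zero A).symm) hu
    (right_mem_Icc.2 ht)
  exact hu0 (by simpa [flowX_self] using hx0)

theorem hasDerivAt_riccatiSolution {t : ℝ} (ht : t ≤ T) :
    HasDerivAt (riccatiSolution A S Q T) (riccatiField A S Q (riccatiSolution A S Q T t)) t := by
  have hX := isUnit_det_flowX A T hQ hS ht
  refine ((hasDerivAt_flowY A S Q T t).mul
    ((hasDerivAt_flowX A S Q T t).matrix_inv hX)).congr_deriv ?_
  have hXX : flowX A S Q T t * (flowX A S Q T t)⁻¹ = 1 := mul_nonsing_inv _ hX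
  simp only [riccatiField, riccatiSolution, sub_mul, neg_mul, mul_neg, mul_sub, Matrix.mul_assoc,
    hXX, Matrix.mul_one]
  abel

theorem eqOn_riccatiSolution {a : ℝ} {K : ℝ → Matrix ι ι ℝ}
    (hK : ∀ t ∈ Icc a T, HasDerivWithinAt K (riccatiField A S Q (K t)) (Icc a T) t)
    (hKT : K T = 0) : EqOn K (riccatiSolution A S Q T) (Icc a T) := fun t ht =>
  ODE_solution_unique_of_contDiff_of_mem_Icc (contDiff_riccatiField A S Q)
    (right_mem_Icc.2 (ht.1.trans ht.2)) hK
    (fun s hs => (hasDerivAt_riccatiSolution A T hQ hS hs.2).hasDerivWithinAt)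
    (by rw [hKT, riccatiSolution_self]) ht

theorem riccatiSolution_isSymm {t : ℝ} (ht : t ≤ T) : (riccatiSolution A S Q T t).IsSymm := by
  refine eqOn_riccatiSolution A T hQ hS (K := fun s => (riccatiSolution A S Q T s)ᵀ)
    (fun s hs => ?_) (by simp [riccatiSolution_self]) (left_mem_Icc.2 ht)
  rw [← riccatiField_transpose (isHermitian_iff_isSymm.1 hS.isHermitian)
    (isHermitian_iff_isSymm.1 hQ.isHermitian)]
  exact (hasDerivAt_riccatiSolution A T hQ hS hs.2).matrix_transpose.hasDerivWithinAt

theorem riccatiSolution_posSemidef {t : ℝ} (ht : t ≤ T) :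
    (riccatiSolution A S Q T t).PosSemidef := by
  rw [posSemidef_iff_dotProduct_mulVec, isHermitian_iff_isSymm]
  refine ⟨riccatiSolution_isSymm A T hQ hS ht, fun v => ?_⟩
  have hX := isUnit_det_flowX A T hQ hS ht
  obtain ⟨w, rfl⟩ : ∃ w : ι → ℝ, flowX A S Q T t *ᵥ w = v :=
    ⟨(flowX A S Q T t)⁻¹ *ᵥ v, by rw [mulVec_mulVec, mul_nonsing_inv _ hX, one_mulVec]⟩
  rw [star_trivial, riccatiSolution, mulVec_mulVec, Matrix.mul_assoc, nonsing_inv_mul _ hX,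
    Matrix.mul_one]
  exact flow_dotProduct_nonneg A T hQ hS w ht

end Flow

end

attribute [local instance] Matrix.normedAddCommGroup Matrix.normedSpace

theorem riccati_terminal_value_existence_uniqueness_general
    (n : ℕ) (T r : ℝ) (hr : 0 < r)
    (A : Matrix (Fin n) (Fin n) ℝ) (B : Matrix (Fin n) (Fin 1) ℝ)
    (Q : Matrix (Fin n) (Fin n) ℝ) (hQ : Q.PosSemidef) :
    ∃ K : ℝ → Matrix (Fin n) (Fin n) ℝ,
      ((∃ K' : ℝ → Matrix (Fin n) (Fin n) ℝ,
          ContinuousOn K' (Icc 0 T) ∧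
          ∀ t ∈ Icc (0 : ℝ) T,
            HasDerivWithinAt K (K' t) (Icc 0 T) t ∧
            K' t + K t * A + Aᵀ * K t - r⁻¹ • (K t * B * Bᵀ * K t) + Q = 0) ∧
        K T = 0) ∧
      (∀ K₂ : ℝ → Matrix (Fin n) (Fin n) ℝ,
        ((∃ K₂' : ℝ → Matrix (Fin n) (Fin n) ℝ,
            ContinuousOn K₂' (Icc 0 T) ∧
            ∀ t ∈ Icc (0 : ℝ) T,
              HasDerivWithinAt K₂ (K₂' t) (Icc 0 T) t ∧
              K₂' t + K₂ t * A + Aᵀ * K₂ t - r⁻¹ • (K₂ t * B * Bᵀ * K₂ t) + Q = 0) ∧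
          K₂ T = 0) →
        ∀ t ∈ Icc (0 : ℝ) T, K₂ t = K t) ∧
      (∀ t ∈ Icc (0 : ℝ) T, (K t).IsSymm ∧ (K t).PosSemidef) := by
  set S := r⁻¹ • (B * Bᵀ)
  have hS : S.PosSemidef := by
    simpa [conjTranspose_eq_transpose_of_trivial] using
      (posSemidef_self_mul_conjTranspose B).smul (inv_nonneg.2 hr.le)
  have hequation (M M' : Matrix (Fin n) (Fin n) ℝ) :
      M' + M * A + Aᵀ * M - r⁻¹ • (M * B * Bᵀ * M) + Q = 0 ↔ M' = riccatiField A S Q M := by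
    have hMSM : M * S * M = r⁻¹ • (M * B * Bᵀ * M) := by simp [S, Matrix.mul_assoc]
    rw [riccatiField, eq_neg_iff_add_eq_zero, hMSM]
    exact iff_of_eq (congrArg (· = 0) (by abel))
  set K := riccatiSolution A S Q T
  have hK (t) (ht : t ∈ Icc 0 T) :
      HasDerivWithinAt K (riccatiField A S Q (K t)) (Icc 0 T) t :=
    (hasDerivAt_riccatiSolution A T hQ hS ht.2).hasDerivWithinAt
  refine ⟨K, ⟨⟨fun t => riccatiField A S Q (K t), ?_,
    fun t ht => ⟨hK t ht, (hequation _ _).2 rfl⟩⟩, riccatiSolution_self A S Q T⟩, ?_, fun t ht =>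
    ⟨riccatiSolution_isSymm A T hQ hS ht.2, riccatiSolution_posSemidef A T hQ hS ht.2⟩⟩
  · have hcont : Continuous (riccatiField A S Q) := by unfold riccatiField; fun_prop
    exact hcont.comp_continuousOn fun t ht => (hK t ht).continuousWithinAt
  · rintro K₂ ⟨⟨K₂', -, hK₂⟩, hK₂T⟩ t ht
    refine eqOn_riccatiSolution A T hQ hS (fun s hs => ?_) hK₂T ht
    rw [← (hequation _ _).1 (hK₂ s hs).2]
    exact (hK₂ s hs).1

/-- The finite-horizon matrix Riccati terminal value problem
`K' + KA + AᵀK − K B r⁻¹ Bᵀ K + Q = 0`, `K(T) = 0`, with `Q` symmetric positive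
semidefinite, has a unique continuously differentiable solution on `[0,T]`, and the
solution is symmetric positive semidefinite at each time. -/
theorem riccati_terminal_value_existence_uniqueness
    (n : ℕ) (hn : 1 ≤ n) (T r : ℝ) (hT : 0 < T) (hr : 0 < r)
    (A : Matrix (Fin n) (Fin n) ℝ) (B : Matrix (Fin n) (Fin 1) ℝ)
    (Q : Matrix (Fin n) (Fin n) ℝ) (hQ : Q.PosSemidef) :
    ∃ K : ℝ → Matrix (Fin n) (Fin n) ℝ,
      ((∃ K' : ℝ → Matrix (Fin n) (Fin n) ℝ,
          ContinuousOn K' (Icc 0 T) ∧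
          ∀ t ∈ Icc (0 : ℝ) T,
            HasDerivWithinAt K (K' t) (Icc 0 T) t ∧
            K' t + K t * A + Aᵀ * K t - r⁻¹ • (K t * B * Bᵀ * K t) + Q = 0) ∧
        K T = 0) ∧
      (∀ K₂ : ℝ → Matrix (Fin n) (Fin n) ℝ,
        ((∃ K₂' : ℝ → Matrix (Fin n) (Fin n) ℝ,
            ContinuousOn K₂' (Icc 0 T) ∧
            ∀ t ∈ Icc (0 : ℝ) T,
              HasDerivWithinAt K₂ (K₂' t) (Icc 0 T) t ∧
              K₂' t + K₂ t * A + Aᵀ * K₂ t - r⁻¹ • (K₂ t * B * Bᵀ * K₂ t) + Q = 0) ∧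
          K₂ T = 0) →
        ∀ t ∈ Icc (0 : ℝ) T, K₂ t = K t) ∧
      (∀ t ∈ Icc (0 : ℝ) T, (K t).IsSymm ∧ (K t).PosSemidef) :=
  riccati_terminal_value_existence_uniqueness_general n T r hr A B Q hQ
end
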